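/- Let X be a random variable with E X² = 1 whose moments grow α-regularly (α ≥ 1) and with speed β > 1 (‖X‖_{βp} ≥ 2‖X‖_p for p ≥ 2). For t ≥ 2 define q = inf{p ≥ 2 : ‖X‖_{βp} ≥ t}. Then N(t) := −ln P(|X| > t) ≥ q·ln 2. -/

import Mathlib

/-!
Chebyshev's inequality in `L^p` gives `P(|X| > t) ≤ (‖X‖_p / t)^p`. For `2 ≤ p < q` we have
`‖X‖_{βp} < t` by the definition of `q`, so the speed condition yields `2‖X‖_p ≤ t`, hence
`P(|X| > t) ≤ 2^{-p}`; letting `p ↑ q` gives the bound. When `q = 2` the same inequality at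
`p = 2` follows from `‖X‖₂ = 1` and `t ≥ 2`.
-/

open MeasureTheory

/-- `‖X‖_p = (E|X|^p)^{1/p}`. -/
noncomputable def mnorm {Ω : Type*} [MeasurableSpace Ω] (μ : Measure Ω) (X : Ω → ℝ)
    (p : ℝ) : ℝ :=
  (∫ ω, |X ω| ^ p ∂μ) ^ (1 / p)

section Moments

variable {Ω : Type*} [MeasurableSpace Ω] (μ : Measure Ω) (X : Ω → ℝ)

lemma mnorm_nonneg (p : ℝ) : 0 ≤ mnorm μ X p :=
  Real.rpow_nonneg (integral_nonneg fun _ => Real.rpow_nonneg (abs_nonneg _) _) _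

lemma mnorm_rpow_self {p : ℝ} (hp : p ≠ 0) : mnorm μ X p ^ p = ∫ ω, |X ω| ^ p ∂μ := by
  rw [mnorm, ← Real.rpow_mul (integral_nonneg fun _ => Real.rpow_nonneg (abs_nonneg _) _),
    one_div_mul_cancel hp, Real.rpow_one]

lemma mnorm_two : mnorm μ X 2 = √(∫ ω, X ω ^ 2 ∂μ) := by
  simp only [mnorm, Real.sqrt_eq_rpow, Real.rpow_two, sq_abs]

variable {μ X} [IsFiniteMeasure μ]

lemma measure_abs_gt_toReal_le_mnorm_div_rpow {p t : ℝ} (hp : 0 < p) (ht : 0 < t)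
    (hX : MemLp X (ENNReal.ofReal p) μ) :
    (μ {ω | t < |X ω|}).toReal ≤ (mnorm μ X p / t) ^ p := by
  have hint : Integrable (fun ω => |X ω| ^ p) μ := by
    simpa [ENNReal.toReal_ofReal hp.le] using hX.integrable_norm_rpow (by simpa using hp) (by simp)
  have hmarkov : t ^ p * μ.real {ω | t ^ p ≤ |X ω| ^ p} ≤ mnorm μ X p ^ p := by
    rw [mnorm_rpow_self μ X hp.ne']
    exact mul_meas_ge_le_integral_of_nonneg
      (Filter.Eventually.of_forall fun _ => Real.rpow_nonneg (abs_nonneg _) _) hint _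
  have hsub : μ.real {ω | t < |X ω|} ≤ μ.real {ω | t ^ p ≤ |X ω| ^ p} :=
    measureReal_mono fun ω hω => Real.rpow_le_rpow ht.le (le_of_lt hω) hp.le
  have htp : 0 < t ^ p := Real.rpow_pos_of_pos ht p
  rw [Real.div_rpow (mnorm_nonneg μ X p) ht.le, le_div_iff₀ htp]
  exact (mul_le_mul_of_nonneg_right hsub htp.le).trans (by linarith)

lemma measure_abs_gt_toReal_le_two_rpow_neg {p t : ℝ} (hp : 0 < p) (ht : 0 < t)
    (hX : MemLp X (ENNReal.ofReal p) μ) (hpt : 2 * mnorm μ X p ≤ t) :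
    (μ {ω | t < |X ω|}).toReal ≤ 2 ^ (-p) := by
  refine (measure_abs_gt_toReal_le_mnorm_div_rpow hp ht hX).trans ?_
  rw [Real.rpow_neg zero_le_two, ← Real.inv_rpow zero_le_two]
  gcongr
  · exact div_nonneg (mnorm_nonneg μ X p) ht.le
  · rw [div_le_iff₀ ht]; linarith

end Moments

theorem stmt9_general {Ω : Type*} [MeasurableSpace Ω] (μ : Measure Ω) [IsProbabilityMeasure μ]
    (X : Ω → ℝ) (β : ℝ)
    (hvar : ∫ ω, (X ω) ^ 2 ∂μ = 1)
    (hmem : ∀ p : ℝ, 2 ≤ p → MemLp X (ENNReal.ofReal p) μ)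
    (hspeed : ∀ p : ℝ, 2 ≤ p → 2 * mnorm μ X p ≤ mnorm μ X (β * p))
    (t : ℝ) (ht : 2 ≤ t) :
    (μ {ω | t < |X ω|}).toReal
      ≤ 2 ^ (-(sInf {p : ℝ | 2 ≤ p ∧ t ≤ mnorm μ X (β * p)})) := by
  set S := {p : ℝ | 2 ≤ p ∧ t ≤ mnorm μ X (β * p)}
  have ht0 : 0 < t := by linarith
  rcases S.eq_empty_or_nonempty with hS | hS
  · -- `sInf ∅ = 0`, so the claim is `P(|X| > t) ≤ 1`.
    rw [hS, Real.sInf_empty, neg_zero, Real.rpow_zero]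
    exact ENNReal.toReal_le_of_le_ofReal zero_le_one (by simpa using prob_le_one)
  have hq : 2 ≤ sInf S := le_csInf hS fun _ hp => hp.1
  rcases hq.eq_or_lt with hq | hq
  · rw [← hq]
    refine measure_abs_gt_toReal_le_two_rpow_neg two_pos ht0 (hmem 2 le_rfl) ?_
    rw [mnorm_two, hvar, Real.sqrt_one]; linarith
  have hbelow : ∀ p ∈ Set.Ico 2 (sInf S), (μ {ω | t < |X ω|}).toReal ≤ 2 ^ (-p) := by
    intro p ⟨hp, hpq⟩
    have hpS : mnorm μ X (β * p) < t :=
      not_le.mp fun h => notMem_of_lt_csInf hpq ⟨2, fun _ h => h.1⟩ ⟨hp, h⟩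
    exact measure_abs_gt_toReal_le_two_rpow_neg (by linarith) ht0 (hmem p hp)
      ((hspeed p hp).trans hpS.le)
  have hclosed : IsClosed {p : ℝ | (μ {ω | t < |X ω|}).toReal ≤ 2 ^ (-p)} :=
    isClosed_le continuous_const
      ((Real.continuous_const_rpow two_ne_zero).comp continuous_neg)
  exact closure_minimal hbelow hclosed (by rw [closure_Ico hq.ne]; exact ⟨hq.le, le_rfl⟩)

/-- If `E X² = 1`, the moments of `X` grow α-regularly and with speed `β > 1`, then for
`t ≥ 2` and `q = inf {p ≥ 2 : ‖X‖_{βp} ≥ t}` one has `N(t) = -ln P(|X| > t) ≥ q ln 2`,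
i.e. `P(|X| > t) ≤ 2^{-q}`. -/
theorem stmt9 {Ω : Type*} [MeasurableSpace Ω] (μ : Measure Ω) [IsProbabilityMeasure μ]
    (X : Ω → ℝ) (α β : ℝ) (hα : 1 ≤ α) (hβ : 1 < β)
    (hvar : ∫ ω, (X ω) ^ 2 ∂μ = 1)
    (hmem : ∀ p : ℝ, 2 ≤ p → MemLp X (ENNReal.ofReal p) μ)
    (hreg : ∀ p q : ℝ, 2 ≤ q → q ≤ p → mnorm μ X p ≤ α * (p / q) * mnorm μ X q)
    (hspeed : ∀ p : ℝ, 2 ≤ p → 2 * mnorm μ X p ≤ mnorm μ X (β * p))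
    (t : ℝ) (ht : 2 ≤ t) :
    (μ {ω | t < |X ω|}).toReal
      ≤ 2 ^ (-(sInf {p : ℝ | 2 ≤ p ∧ t ≤ mnorm μ X (β * p)})) :=
  stmt9_general μ X β hvar hmem hspeed t ht
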